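/- Risk distribution in terms of the ROC curve (Section 3.3). Let U : Ω → [0,1] have conditional distribution given D = 0 equal to the uniform distribution on [0,1], let ρ = P(D = 1) ∈ (0,1), and let G : [0,1] → ℝ be continuous and strictly decreasing with E[D | σ(U)] = expit(logit ρ + G(U)) almost surely. Define ROC(t) = ∫₀ᵗ exp(G(u)) du and Risk(u) = ρ·exp(G(u)) / (ρ·exp(G(u)) + 1 − ρ) (so Risk(u) = expit(logit ρ + G(u)) and Risk is strictly decreasing). Then for every t ∈ (0,1), P(Risk(U) ≤ Risk(t)) = 1 − (1 − ρ)·t − ρ·ROC(t). -/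

import Mathlib

open MeasureTheory Real Set

/-- The expit (inverse logit) function. -/
noncomputable def expit (x : ℝ) : ℝ := Real.exp x / (1 + Real.exp x)

/-- The logit function. -/
noncomputable def logit (p : ℝ) : ℝ := Real.log (p / (1 - p))

/-! Bayes' rule in odds form: if the log-odds of `D` given `U` is `logit ρ + G U`, then the law
of `U` on `D` has density `exp (logit ρ + G) = ρ / (1 - ρ) · exp G` with respect to its law on
`Dᶜ`, which is `(1 - ρ)` times the uniform law. Hence `P(U ≤ t, D) = ρ · ROC t` and
`P(U ≤ t, Dᶜ) = (1 - ρ) t`; the law of `U` has no atoms, and since `Risk = expit (logit ρ + G)`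
is strictly decreasing, `{Risk U ≤ Risk t} = {t ≤ U}`. -/

theorem expit_eq_sigmoid : expit = sigmoid := by
  funext x
  rw [expit, sigmoid_def, Real.exp_neg]
  field_simp
  ring

theorem exp_logit {p : ℝ} (h0 : 0 < p) (h1 : p < 1) : exp (logit p) = p / (1 - p) :=
  exp_log (div_pos h0 (sub_pos.2 h1))

theorem sigmoid_logit_add {p : ℝ} (h0 : 0 < p) (h1 : p < 1) (x : ℝ) :
    sigmoid (logit p + x) = p * exp x / (p * exp x + 1 - p) := by
  have h1' : 0 < 1 - p := sub_pos.2 h1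
  have hden : 0 < p * exp x + 1 - p := by nlinarith [exp_pos x]
  rw [sigmoid_def, neg_add, exp_add, exp_neg, exp_logit h0 h1, exp_neg]
  field_simp
  ring

theorem ContinuousOn.exists_continuous_eqOn_Icc {α β : Type*} [LinearOrder α] [TopologicalSpace α]
    [OrderTopology α] [TopologicalSpace β] {a b : α} {f : α → β} (hab : a ≤ b)
    (hf : ContinuousOn f (Icc a b)) : ∃ g : α → β, Continuous g ∧ EqOn g f (Icc a b) :=
  ⟨IccExtend hab ((Icc a b).domRestrict f), continuous_IccExtend_iff.2 hf.domRestrict,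
    fun _ hx => IccExtend_of_mem _ _ hx⟩

theorem measureReal_Ici_eq_one_sub_measureReal_Iic {L : Measure ℝ} [IsProbabilityMeasure L]
    (hL : L ≪ volume) (t : ℝ) : L.real (Ici t) = 1 - L.real (Iic t) := by
  rw [← compl_Iio, probReal_compl_eq_one_sub measurableSet_Iio,
    measureReal_congr (Iio_ae_eq_Iic' (hL volume_singleton))]

theorem measureReal_withDensity_smul_restrict_Icc_Iic {c : ENNReal} {f : ℝ → ℝ}
    (hf : Continuous f) (hf0 : ∀ x, 0 ≤ f x) {a b t : ℝ} (hat : a ≤ t) (htb : t ≤ b) :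
    ((c • volume.restrict (Icc a b)).withDensity fun x => ENNReal.ofReal (f x)).real (Iic t) =
      c.toReal * ∫ x in a..t, f x := by
  have hI : Iic t ∩ Icc a b = Icc a t := by
    ext x; simp only [mem_inter_iff, mem_Iic, mem_Icc]; grind
  rw [measureReal_def, withDensity_smul_measure, Measure.smul_apply, smul_eq_mul,
    withDensity_apply _ measurableSet_Iic, Measure.restrict_restrict measurableSet_Iic, hI,
    intervalIntegral.integral_of_le hat, ← integral_Icc_eq_integral_Ioc,
    ← ofReal_integral_eq_lintegral_ofReal hf.integrableOn_Icc (ae_of_all _ hf0),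
    ENNReal.toReal_mul, ENNReal.toReal_ofReal (integral_nonneg hf0)]

theorem map_eq_smul_restrict_Icc_of_measureReal_le {Ω : Type*} [MeasurableSpace Ω]
    {ν : Measure Ω} [IsFiniteMeasure ν] {X : Ω → ℝ} (hX : Measurable X)
    (hX01 : ∀ ω, X ω ∈ Icc (0 : ℝ) 1)
    (hcdf : ∀ t ∈ Icc (0 : ℝ) 1, ν.real {ω | X ω ≤ t} = t * ν.real univ) :
    ν.map X = ν univ • volume.restrict (Icc (0 : ℝ) 1) := by
  refine Measure.ext_of_Iic _ _ fun a => ?_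
  rw [Measure.map_apply hX measurableSet_Iic, Measure.smul_apply,
    Measure.restrict_apply measurableSet_Iic, smul_eq_mul]
  rcases lt_or_ge a 0 with ha0 | ha0
  · have hX : X ⁻¹' Iic a = ∅ :=
      eq_empty_of_forall_notMem fun ω hω => (hω.trans_lt ha0).not_ge (hX01 ω).1
    have hI : Iic a ∩ Icc (0 : ℝ) 1 = ∅ :=
      eq_empty_of_forall_notMem fun x hx => (hx.1.trans_lt ha0).not_ge hx.2.1
    simp [hX, hI]
  rcases le_or_gt a 1 with ha1 | ha1
  · have hI : Iic a ∩ Icc (0 : ℝ) 1 = Icc 0 a := by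
      ext x; simp only [mem_inter_iff, mem_Iic, mem_Icc]; grind
    rw [hI, volume_Icc, sub_zero, ← ofReal_measureReal, ← ofReal_measureReal,
      ← ENNReal.ofReal_mul measureReal_nonneg, mul_comm]
    exact congrArg ENNReal.ofReal (hcdf a ⟨ha0, ha1⟩)
  · have hX : X ⁻¹' Iic a = univ := eq_univ_of_forall fun ω => (hX01 ω).2.trans ha1.le
    have hI : Iic a ∩ Icc (0 : ℝ) 1 = Icc 0 1 := inter_eq_right.2 fun x hx => hx.2.trans ha1.le
    simp [hX, hI]


section Bayes

variable {Ω α : Type*} [MeasurableSpace Ω] [mα : MeasurableSpace α] {μ : Measure Ω}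
  [IsFiniteMeasure μ] {D : Set Ω} {U : Ω → α}

theorem map_restrict_eq_withDensity_of_condExp_indicator (hD : MeasurableSet D)
    (hU : Measurable U) {r : α → ℝ} (hr : Measurable r)
    (h : μ[D.indicator (fun _ => (1 : ℝ)) | mα.comap U] =ᵐ[μ] fun ω => r (U ω)) :
    (μ.restrict D).map U = (μ.map U).withDensity fun a => ENNReal.ofReal (r a) := by
  have hint : Integrable (fun ω => r (U ω)) μ := integrable_condExp.congr h
  have hnonneg : 0 ≤ᵐ[μ] fun ω => r (U ω) := by
    filter_upwards [h, condExp_nonneg (m := mα.comap U)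
      (ae_of_all μ (indicator_nonneg fun _ _ => zero_le_one' ℝ))] with ω hω h0
    exact hω ▸ h0
  ext B hB
  have hUB : MeasurableSet[mα.comap U] (U ⁻¹' B) := ⟨B, hB, rfl⟩
  rw [Measure.map_apply hU hB, Measure.restrict_apply (hU hB), withDensity_apply _ hB,
    setLIntegral_map hB hr.ennreal_ofReal hU,
    ← ofReal_integral_eq_lintegral_ofReal hint.restrict (ae_restrict_of_ae hnonneg),
    ← setIntegral_congr_ae (hU hB) (h.mono fun ω hω _ => hω),
    setIntegral_condExp hU.comap_le ((integrable_const 1).indicator hD) hUB,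
    setIntegral_indicator hD, setIntegral_const, smul_eq_mul, mul_one, ofReal_measureReal]

theorem map_restrict_eq_withDensity_exp_of_condExp_indicator_eq_sigmoid (hD : MeasurableSet D)
    (hU : Measurable U) {η : α → ℝ} (hη : Measurable η)
    (h : μ[D.indicator (fun _ => (1 : ℝ)) | mα.comap U] =ᵐ[μ] fun ω => sigmoid (η (U ω))) :
    (μ.restrict D).map U =
      ((μ.restrict Dᶜ).map U).withDensity fun a => ENNReal.ofReal (exp (η a)) := by
  have hcompl : μ[Dᶜ.indicator (fun _ => (1 : ℝ)) | mα.comap U] =ᵐ[μ]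
      fun ω => sigmoid (-η (U ω)) := by
    rw [indicator_compl]
    filter_upwards [condExp_sub (integrable_const (1 : ℝ))
      ((integrable_const (1 : ℝ)).indicator hD) (mα.comap U), h] with ω h1 h2
    rw [h1, Pi.sub_apply, condExp_const (μ := μ) hU.comap_le, h2, sigmoid_neg]
  rw [map_restrict_eq_withDensity_of_condExp_indicator hD hU
      (continuous_sigmoid.measurable.comp hη) h,
    map_restrict_eq_withDensity_of_condExp_indicator hD.compl hU
      (show Measurable fun a => sigmoid (-η a) from continuous_sigmoid.measurable.comp hη.neg)
      hcompl,
    ← withDensity_mul _ (by fun_prop) (by fun_prop)]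
  congr with a
  rw [Pi.mul_apply, ← ENNReal.ofReal_mul (sigmoid_nonneg _)]
  simpa using congrArg ENNReal.ofReal (sigmoid_mul_rexp_neg (-η a)).symm

end Bayes

/-- Risk distribution in terms of the ROC curve: under the logistic model on the
standardized marker `U` (uniform on `[0,1]` among controls) with continuous, strictly
decreasing `G`, defining `ROC(t) = ∫₀ᵗ exp(G u) du` and
`Risk(u) = ρ·exp(G u)/(ρ·exp(G u) + 1 − ρ)`, one has
`P(Risk(U) ≤ Risk(t)) = 1 − (1 − ρ)·t − ρ·ROC(t)` for all `t ∈ (0,1)`. -/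
theorem risk_distribution_from_roc
    {Ω : Type*} [MeasurableSpace Ω] (μ : Measure Ω) [IsProbabilityMeasure μ]
    (D : Set Ω) (hD : MeasurableSet D)
    (hρ0 : 0 < (μ D).toReal) (hρ1 : (μ D).toReal < 1)
    (U : Ω → ℝ) (hU : Measurable U) (hUrange : ∀ ω, U ω ∈ Icc (0:ℝ) 1)
    (hUnif : ∀ t ∈ Icc (0:ℝ) 1,
      (μ ({ω | U ω ≤ t} ∩ Dᶜ)).toReal = t * (μ Dᶜ).toReal)
    (G : ℝ → ℝ) (hGcont : ContinuousOn G (Icc (0:ℝ) 1))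
    (hGanti : StrictAntiOn G (Icc (0:ℝ) 1))
    (hmodel : μ[D.indicator (fun _ => (1:ℝ)) | MeasurableSpace.comap U Real.measurableSpace]
      =ᵐ[μ] fun ω => expit (logit (μ D).toReal + G (U ω)))
    (ROC Risk : ℝ → ℝ)
    (hROC : ∀ t, ROC t = ∫ u in (0:ℝ)..t, Real.exp (G u))
    (hRisk : ∀ u, Risk u = (μ D).toReal * Real.exp (G u) /
      ((μ D).toReal * Real.exp (G u) + 1 - (μ D).toReal)) :
    ∀ t ∈ Ioo (0:ℝ) 1,
      (μ {ω | Risk (U ω) ≤ Risk t}).toReal =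
        1 - (1 - (μ D).toReal) * t - (μ D).toReal * ROC t := by
  intro t ht
  have htIcc : t ∈ Icc (0 : ℝ) 1 := Ioo_subset_Icc_self ht
  set ρ := (μ D).toReal
  have hρc : μ.real Dᶜ = 1 - ρ := probReal_compl_eq_one_sub hD
  -- `G` need not be measurable outside `[0, 1]`, so the model is rewritten with a continuous `g`.
  obtain ⟨g, hg, hgG⟩ := hGcont.exists_continuous_eqOn_Icc zero_le_one
  set ν₀ := (μ.restrict Dᶜ).map U
  set ν₁ := (μ.restrict D).map U
  have hν₀ : ν₀ = μ Dᶜ • volume.restrict (Icc 0 1) := by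
    rw [← Measure.restrict_apply_univ]
    refine map_eq_smul_restrict_Icc_of_measureReal_le hU hUrange fun s hs => ?_
    rw [measureReal_restrict_apply' hD.compl, measureReal_restrict_apply_univ]
    exact hUnif s hs
  have hν₁ : ν₁ = ν₀.withDensity fun u => ENNReal.ofReal (exp (logit ρ + g u)) :=
    map_restrict_eq_withDensity_exp_of_condExp_indicator_eq_sigmoid hD hU (by fun_prop)
      (hmodel.trans (.of_eq (funext fun ω => by rw [expit_eq_sigmoid, hgG (hUrange ω)])))
  have hlaw : μ.map U = ν₁ + ν₀ := by
    rw [← Measure.map_add _ _ hU, Measure.restrict_add_restrict_compl hD]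
  have hac : μ.map U ≪ volume := by
    have h₀ : ν₀ ≪ volume := hν₀ ▸ Measure.smul_absolutelyContinuous.trans
      (Measure.absolutelyContinuous_of_le Measure.restrict_le_self)
    rw [hlaw, hν₁]
    exact (withDensity_absolutelyContinuous _ _).trans h₀ |>.add_left h₀
  have hν₀t : ν₀.real (Iic t) = (1 - ρ) * t := by
    rw [map_measureReal_apply hU measurableSet_Iic,
      measureReal_restrict_apply (hU measurableSet_Iic), ← hρc, mul_comm]
    exact hUnif t htIcc
  have hν₁t : ν₁.real (Iic t) = ρ * ROC t := by
    have hodds : ∫ u in (0 : ℝ)..t, exp (logit ρ + g u) = ρ / (1 - ρ) * ROC t := by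
      rw [hROC, ← intervalIntegral.integral_const_mul]
      refine intervalIntegral.integral_congr fun u hu => ?_
      rw [uIcc_of_le htIcc.1] at hu
      rw [exp_add, exp_logit hρ0 hρ1, hgG ⟨hu.1, hu.2.trans htIcc.2⟩]
    rw [hν₁, hν₀, measureReal_withDensity_smul_restrict_Icc_Iic (by fun_prop)
      (fun _ => (exp_pos _).le) htIcc.1 htIcc.2, ← measureReal_def, hρc, hodds]
    field_simp [(sub_pos.2 hρ1).ne']
  have hset : {ω | Risk (U ω) ≤ Risk t} = U ⁻¹' Ici t := by
    ext ω
    simp only [mem_ofPred_eq, mem_preimage, mem_Ici, hRisk, ← sigmoid_logit_add hρ0 hρ1,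
      sigmoid_le_iff, add_le_add_iff_left]
    exact hGanti.le_iff_ge (hUrange ω) htIcc
  have := Measure.isProbabilityMeasure_map (μ := μ) hU.aemeasurable
  rw [hset, ← measureReal_def, ← map_measureReal_apply hU measurableSet_Ici,
    measureReal_Ici_eq_one_sub_measureReal_Iic hac, hlaw, measureReal_add_apply, hν₀t, hν₁t]
  ring
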